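/- In microCCS, every process admits a prime decomposition which is unique up to bisimilarity: if P₁‖…‖Pₙ ∼ Q₁‖…‖Qₘ where all Pᵢ and Qⱼ are prime, then n = m and there is a permutation f of {1,…,n} with Pᵢ ∼ Q_{f(i)} for all i. -/

import Mathlib

/-!
Bisimilarity is a congruence for parallel composition, so processes up to bisimilarity form a
commutative monoid `Beh`; its size (number of prefixes) is additive and vanishes only at `0`, the
prime processes are its irreducible elements, and every irreducible is a prefix `η.x`. Prime
decompositions then exist by induction on size.

For uniqueness, let `S` and `T` be prime decompositions of the same process and `p = η.x` a
factor of maximal size. A visible transition of a product is a transition of one factor, and by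
induction on size the residual on each side has a unique decomposition. The factors of a residual
of a factor `t` are smaller than `t`, hence than `p`, so matching a transition of `t` in `T`
preserves the number of copies of `p` among the remaining factors. Firing a second factor of `S`
shows `p ∈ T` (if there is none, `T = {p}` by irreducibility); firing `p` on both sides then
shows that `p` must be matched by a copy of `p`, and cancelling it leaves decompositions of a
smaller process.
-/

/-- CCS visible actions: a name `a` or a coname `ā`. -/
inductive Act where
  | inp : ℕ → Act
  | out : ℕ → Act
deriving DecidableEq

/-- The coaction. -/
def Act.co : Act → Act
  | .inp a => .out a
  | .out a => .inp a

/-- MicroCCS processes: nil, prefix, parallel composition. -/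
inductive Proc where
  | nil : Proc
  | pre : Act → Proc → Proc
  | par : Proc → Proc → Proc
deriving DecidableEq

/-- Transition labels: a visible action or τ. -/
inductive Lab where
  | act : Act → Lab
  | tau : Lab
deriving DecidableEq

/-- The standard CCS labelled transition system on microCCS. -/
inductive Step : Proc → Lab → Proc → Prop where
  | pre (η : Act) (P : Proc) : Step (.pre η P) (.act η) P
  | syn {P P' Q Q' : Proc} {η : Act} :
      Step P (.act η) P' → Step Q (.act η.co) Q' →
      Step (.par P Q) .tau (.par P' Q')
  | parL {P P' : Proc} {μ : Lab} (Q : Proc) :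
      Step P μ P' → Step (.par P Q) μ (.par P' Q)
  | parR {Q Q' : Proc} {μ : Lab} (P : Proc) :
      Step Q μ Q' → Step (.par P Q) μ (.par P Q')

/-- A (symmetric) bisimulation. -/
def IsBisim (R : Proc → Proc → Prop) : Prop :=
  (∀ P Q, R P Q → R Q P) ∧
  ∀ P Q μ P', R P Q → Step P μ P' → ∃ Q', Step Q μ Q' ∧ R P' Q'

/-- Strong bisimilarity: the union of all bisimulations. -/
def Bisim (P Q : Proc) : Prop := ∃ R, IsBisim R ∧ R P Q

/-- The size of a process: its number of prefixes. -/
def Proc.size : Proc → ℕ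
  | .nil => 0
  | .pre _ P => 1 + P.size
  | .par P Q => P.size + Q.size

/-- Structural congruence: abelian monoid laws for parallel composition. -/
inductive SC : Proc → Proc → Prop where
  | refl (P) : SC P P
  | symm : SC P Q → SC Q P
  | trans : SC P Q → SC Q R → SC P R
  | comm (P Q) : SC (.par P Q) (.par Q P)
  | assoc (P Q R) : SC (.par P (.par Q R)) (.par (.par P Q) R)
  | unit (P) : SC (.par P .nil) P
  | pre (η) : SC P Q → SC (.pre η P) (.pre η Q)
  | par : SC P P' → SC Q Q' → SC (.par P Q) (.par P' Q')

/-- `pow P k` is the k-fold parallel composition of `P`. -/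
def pow (P : Proc) : ℕ → Proc
  | 0 => .nil
  | n+1 => .par P (pow P n)

/-- One step of rewriting with the distribution law
    `η.(P ‖ (η.P)^k) ⇝ (η.P)^{k+1}` (k ≥ 1), modulo structural
    congruence, in any context. -/
inductive RW : Proc → Proc → Prop where
  | head {η : Act} {P : Proc} {k : ℕ} (hk : 1 ≤ k) :
      RW (.pre η (.par P (pow (.pre η P) k))) (pow (.pre η P) (k+1))
  | pre (η) : RW P P' → RW (.pre η P) (.pre η P')
  | parL (Q) : RW P P' → RW (.par P Q) (.par P' Q)
  | parR (P) : RW Q Q' → RW (.par P Q) (.par P Q')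
  | congr : SC P P₁ → RW P₁ P₂ → SC P₂ P' → RW P P'

/-- Reflexive-transitive closure of the distribution rewriting. -/
def Rws : Proc → Proc → Prop := Relation.ReflTransGen RW

/-- Normal forms for the distribution rewriting. -/
def NF (P : Proc) : Prop := ¬ ∃ P', RW P P'

/-- Prime processes. -/
def IsPrime (P : Proc) : Prop :=
  ¬ Bisim P .nil ∧ ∀ Q R, Bisim P (.par Q R) → Bisim Q .nil ∨ Bisim R .nil

/-- Parallel composition of a list of processes. -/
def prodList : List Proc → Proc := List.foldr .par .nil

@[simp] theorem Act.co_co (η : Act) : η.co.co = η := by cases η <;> rfl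

namespace Bisim

theorem isBisim : IsBisim Bisim :=
  ⟨fun _ _ ⟨R, hR, h⟩ => ⟨R, hR, hR.1 _ _ h⟩, fun _ _ _ _ ⟨R, hR, h⟩ hs =>
    let ⟨Q', hQ', h'⟩ := hR.2 _ _ _ _ h hs
    ⟨Q', hQ', R, hR, h'⟩⟩

theorem symm {P Q : Proc} (h : Bisim P Q) : Bisim Q P := isBisim.1 _ _ h

theorem step {P Q P' : Proc} {μ : Lab} (h : Bisim P Q) (hs : Step P μ P') :
    ∃ Q', Step Q μ Q' ∧ Bisim P' Q' :=
  isBisim.2 _ _ _ _ h hs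

theorem of_simulation (R : Proc → Proc → Prop)
    (fwd : ∀ P Q μ P', R P Q → Step P μ P' → ∃ Q', Step Q μ Q' ∧ (R P' Q' ∨ Bisim P' Q'))
    (bwd : ∀ P Q μ Q', R P Q → Step Q μ Q' → ∃ P', Step P μ P' ∧ (R P' Q' ∨ Bisim P' Q'))
    {P Q : Proc} (h : R P Q) : Bisim P Q := by
  refine ⟨fun X Y => R X Y ∨ R Y X ∨ Bisim X Y, ⟨?_, ?_⟩, .inl h⟩
  · rintro X Y (h | h | h)
    exacts [.inr (.inl h), .inl h, .inr (.inr h.symm)]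
  · rintro X Y μ X' (h | h | h) hs
    · obtain ⟨Y', hY', h'⟩ := fwd _ _ _ _ h hs
      exact ⟨Y', hY', h'.elim .inl (.inr ∘ .inr)⟩
    · obtain ⟨Y', hY', h'⟩ := bwd _ _ _ _ h hs
      exact ⟨Y', hY', h'.elim (.inr ∘ .inl) (.inr ∘ .inr ∘ symm)⟩
    · obtain ⟨Y', hY', h'⟩ := h.step hs
      exact ⟨Y', hY', .inr (.inr h')⟩

theorem refl (P : Proc) : Bisim P P :=
  of_simulation Eq (fun _ _ _ P' h hs => ⟨P', h ▸ hs, .inl rfl⟩)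
    (fun _ _ _ Q' h hs => ⟨Q', h ▸ hs, .inl rfl⟩) rfl

theorem trans {P Q R : Proc} (h₁ : Bisim P Q) (h₂ : Bisim Q R) : Bisim P R := by
  refine of_simulation (fun X Z => ∃ Y, Bisim X Y ∧ Bisim Y Z) ?_ ?_ ⟨Q, h₁, h₂⟩
  · rintro X Z μ X' ⟨Y, hXY, hYZ⟩ hs
    obtain ⟨Y', hY', hXY'⟩ := hXY.step hs
    obtain ⟨Z', hZ', hYZ'⟩ := hYZ.step hY'
    exact ⟨Z', hZ', .inl ⟨Y', hXY', hYZ'⟩⟩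
  · rintro X Z μ Z' ⟨Y, hXY, hYZ⟩ hs
    obtain ⟨Y', hY', hZY'⟩ := hYZ.symm.step hs
    obtain ⟨X', hX', hYX'⟩ := hXY.symm.step hY'
    exact ⟨X', hX', .inl ⟨Y', hYX'.symm, hZY'.symm⟩⟩

theorem pre (η : Act) {P Q : Proc} (h : Bisim P Q) : Bisim (.pre η P) (.pre η Q) := by
  refine of_simulation (fun X Y => X = .pre η P ∧ Y = .pre η Q) ?_ ?_ ⟨rfl, rfl⟩
  · rintro X Y μ X' ⟨rfl, rfl⟩ hs
    cases hs
    exact ⟨Q, .pre η Q, .inr h⟩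
  · rintro X Y μ Y' ⟨rfl, rfl⟩ hs
    cases hs
    exact ⟨P, .pre η P, .inr h⟩

theorem par {P P' Q Q' : Proc} (hP : Bisim P P') (hQ : Bisim Q Q') :
    Bisim (.par P Q) (.par P' Q') := by
  refine ⟨fun X Y => ∃ P P' Q Q', X = .par P Q ∧ Y = .par P' Q' ∧ Bisim P P' ∧ Bisim Q Q',
    ⟨?_, ?_⟩, P, P', Q, Q', rfl, rfl, hP, hQ⟩
  · rintro X Y ⟨P, P', Q, Q', rfl, rfl, hP, hQ⟩
    exact ⟨P', P, Q', Q, rfl, rfl, hP.symm, hQ.symm⟩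
  · rintro X Y μ X' ⟨P, P', Q, Q', rfl, rfl, hP, hQ⟩ hs
    cases hs with
    | syn sP sQ =>
      obtain ⟨P₁, sP', hP₁⟩ := hP.step sP
      obtain ⟨Q₁, sQ', hQ₁⟩ := hQ.step sQ
      exact ⟨_, .syn sP' sQ', _, _, _, _, rfl, rfl, hP₁, hQ₁⟩
    | parL _ sP =>
      obtain ⟨P₁, sP', hP₁⟩ := hP.step sP
      exact ⟨_, .parL _ sP', _, _, _, _, rfl, rfl, hP₁, hQ⟩
    | parR _ sQ =>
      obtain ⟨Q₁, sQ', hQ₁⟩ := hQ.step sQ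
      exact ⟨_, .parR _ sQ', _, _, _, _, rfl, rfl, hP, hQ₁⟩

theorem par_comm (P Q : Proc) : Bisim (.par P Q) (.par Q P) := by
  refine ⟨fun X Y => ∃ P Q, X = .par P Q ∧ Y = .par Q P, ⟨?_, ?_⟩, P, Q, rfl, rfl⟩
  · rintro X Y ⟨P, Q, rfl, rfl⟩
    exact ⟨Q, P, rfl, rfl⟩
  · rintro X Y μ X' ⟨P, Q, rfl, rfl⟩ hs
    cases hs with
    | syn sP sQ => exact ⟨_, .syn sQ ((Act.co_co _).symm ▸ sP), _, _, rfl, rfl⟩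
    | parL _ sP => exact ⟨_, .parR _ sP, _, _, rfl, rfl⟩
    | parR _ sQ => exact ⟨_, .parL _ sQ, _, _, rfl, rfl⟩

theorem par_nil (P : Proc) : Bisim (.par P .nil) P := by
  refine of_simulation (fun X Y => X = .par Y .nil) ?_ ?_ rfl
  · rintro X Y μ X' rfl hs
    cases hs with
    | syn _ s => cases s
    | parL _ sP => exact ⟨_, sP, .inl rfl⟩
    | parR _ s => cases s
  · rintro X Y μ Y' rfl hs
    exact ⟨_, .parL _ hs, .inl rfl⟩

theorem par_assoc (P Q R : Proc) : Bisim (.par P (.par Q R)) (.par (.par P Q) R) := by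
  refine of_simulation (fun X Y => ∃ P Q R, X = .par P (.par Q R) ∧ Y = .par (.par P Q) R)
    ?_ ?_ ⟨P, Q, R, rfl, rfl⟩
  · rintro X Y μ X' ⟨P, Q, R, rfl, rfl⟩ hs
    cases hs with
    | syn sP sQR =>
      cases sQR with
      | parL _ sQ => exact ⟨_, .parL _ (.syn sP sQ), .inl ⟨_, _, _, rfl, rfl⟩⟩
      | parR _ sR => exact ⟨_, .syn (.parL _ sP) sR, .inl ⟨_, _, _, rfl, rfl⟩⟩
    | parL _ sP => exact ⟨_, .parL _ (.parL _ sP), .inl ⟨_, _, _, rfl, rfl⟩⟩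
    | parR _ sQR =>
      cases sQR with
      | syn sQ sR => exact ⟨_, .syn (.parR _ sQ) sR, .inl ⟨_, _, _, rfl, rfl⟩⟩
      | parL _ sQ => exact ⟨_, .parL _ (.parR _ sQ), .inl ⟨_, _, _, rfl, rfl⟩⟩
      | parR _ sR => exact ⟨_, .parR _ sR, .inl ⟨_, _, _, rfl, rfl⟩⟩
  · rintro X Y μ Y' ⟨P, Q, R, rfl, rfl⟩ hs
    cases hs with
    | syn sPQ sR =>
      cases sPQ with
      | parL _ sP => exact ⟨_, .syn sP (.parR _ sR), .inl ⟨_, _, _, rfl, rfl⟩⟩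
      | parR _ sQ => exact ⟨_, .parR _ (.syn sQ sR), .inl ⟨_, _, _, rfl, rfl⟩⟩
    | parL _ sPQ =>
      cases sPQ with
      | syn sP sQ => exact ⟨_, .syn sP (.parL _ sQ), .inl ⟨_, _, _, rfl, rfl⟩⟩
      | parL _ sP => exact ⟨_, .parL _ sP, .inl ⟨_, _, _, rfl, rfl⟩⟩
      | parR _ sQ => exact ⟨_, .parR _ (.parL _ sQ), .inl ⟨_, _, _, rfl, rfl⟩⟩
    | parR _ sR => exact ⟨_, .parR _ (.parR _ sR), .inl ⟨_, _, _, rfl, rfl⟩⟩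

end Bisim

theorem Step.size_pos {P P' : Proc} {μ : Lab} (h : Step P μ P') : 0 < P.size := by
  induction h <;> simp only [Proc.size] at * <;> omega

theorem Step.size_eq_succ {P P' : Proc} {η : Act} (h : Step P (.act η) P') :
    P.size = P'.size + 1 := by
  generalize hμ : Lab.act η = μ at h
  induction h with
  | pre => simp only [Proc.size]; omega
  | syn => cases hμ
  | parL _ _ ih => simp only [Proc.size, ih hμ]; omega
  | parR _ _ ih => simp only [Proc.size, ih hμ]; omega

theorem Proc.exists_step_of_size_pos {P : Proc} (h : 0 < P.size) :
    ∃ η P', Step P (.act η) P' := by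
  induction P with
  | nil => simp [Proc.size] at h
  | pre η P _ => exact ⟨η, P, .pre η P⟩
  | par P Q ihP ihQ =>
    rcases Nat.eq_zero_or_pos P.size with hP | hP
    · obtain ⟨η, Q', hs⟩ := ihQ (by simp only [Proc.size] at h; omega)
      exact ⟨η, _, .parR _ hs⟩
    · obtain ⟨η, P', hs⟩ := ihP hP
      exact ⟨η, _, .parL _ hs⟩

theorem Bisim.size_eq {P Q : Proc} (h : Bisim P Q) : P.size = Q.size := by
  induction hn : Q.size generalizing P Q with
  | zero =>
    by_contra hP
    obtain ⟨η, P', hs⟩ := Proc.exists_step_of_size_pos (Nat.pos_of_ne_zero hP)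
    obtain ⟨Q', hs', -⟩ := h.step hs
    have := hs'.size_pos
    omega
  | succ n ih =>
    obtain ⟨η, Q', hs⟩ := Proc.exists_step_of_size_pos (show 0 < Q.size by omega)
    obtain ⟨P', hs', h'⟩ := h.symm.step hs
    rw [hs'.size_eq_succ, ih h'.symm (by rw [hs.size_eq_succ] at hn; omega)]

theorem Bisim.nil_of_size_eq_zero {P : Proc} (h : P.size = 0) : Bisim P .nil := by
  refine Bisim.of_simulation (fun X Y => X.size = 0 ∧ Y.size = 0) ?_ ?_ ⟨h, rfl⟩
  · rintro X Y μ X' ⟨hX, -⟩ hs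
    exact absurd hs.size_pos (by omega)
  · rintro X Y μ Y' ⟨-, hY⟩ hs
    exact absurd hs.size_pos (by omega)

instance Proc.setoid : Setoid Proc := ⟨Bisim, Bisim.refl, Bisim.symm, Bisim.trans⟩

abbrev Beh := Quotient Proc.setoid

namespace Beh

theorem mk_eq_mk {P Q : Proc} : (⟦P⟧ : Beh) = ⟦Q⟧ ↔ Bisim P Q := Quotient.eq

instance : CommMonoid Beh where
  mul := Quotient.map₂ .par fun _ _ hP _ _ hQ => hP.par hQ
  one := ⟦.nil⟧
  mul_assoc := by
    rintro ⟨P⟩ ⟨Q⟩ ⟨R⟩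
    exact mk_eq_mk.2 (Bisim.par_assoc P Q R).symm
  one_mul := by
    rintro ⟨P⟩
    exact mk_eq_mk.2 ((Bisim.par_comm _ P).trans (Bisim.par_nil P))
  mul_one := by
    rintro ⟨P⟩
    exact mk_eq_mk.2 (Bisim.par_nil P)
  mul_comm := by
    rintro ⟨P⟩ ⟨Q⟩
    exact mk_eq_mk.2 (Bisim.par_comm P Q)

theorem mk_par (P Q : Proc) : (⟦.par P Q⟧ : Beh) = ⟦P⟧ * ⟦Q⟧ := rfl

theorem mk_nil : (⟦.nil⟧ : Beh) = 1 := rfl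

def pre (η : Act) : Beh → Beh := Quotient.map (.pre η) fun _ _ => Bisim.pre η

def size : Beh → ℕ := Quotient.lift Proc.size fun _ _ => Bisim.size_eq

@[simp] theorem size_mul (x y : Beh) : (x * y).size = x.size + y.size := by
  induction x using Quotient.ind
  induction y using Quotient.ind
  rfl

@[simp] theorem size_one : (1 : Beh).size = 0 := rfl

theorem size_eq_zero {x : Beh} : x.size = 0 ↔ x = 1 := by
  induction x using Quotient.ind with
  | _ P =>
    exact ⟨fun h => mk_eq_mk.2 (Bisim.nil_of_size_eq_zero h), fun h => (mk_eq_mk.1 h).size_eq⟩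

instance : Subsingleton Behˣ :=
  Subsingleton.units_of_isUnit fun x ⟨u, hu⟩ => by
    have := congrArg size u.mul_inv
    rw [size_mul, hu, size_one] at this
    exact size_eq_zero.1 (by omega)

theorem _root_.isPrime_iff_irreducible {P : Proc} : IsPrime P ↔ Irreducible (⟦P⟧ : Beh) := by
  simp only [IsPrime, irreducible_iff, isUnit_iff_eq_one, ← mk_nil, mk_eq_mk,
    Quotient.forall, ← mk_par]

def Step (x : Beh) (η : Act) (y : Beh) : Prop :=
  ∃ P P', x = ⟦P⟧ ∧ y = ⟦P'⟧ ∧ _root_.Step P (.act η) P'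

theorem step_mk_iff {P : Proc} {η : Act} {y : Beh} :
    Step ⟦P⟧ η y ↔ ∃ P', _root_.Step P (.act η) P' ∧ y = ⟦P'⟧ := by
  refine ⟨?_, fun ⟨P', hs, hy⟩ => ⟨P, P', rfl, hy, hs⟩⟩
  rintro ⟨Q, Q', hPQ, rfl, hs⟩
  obtain ⟨P', hs', hQP'⟩ := (mk_eq_mk.1 hPQ).symm.step hs
  exact ⟨P', hs', mk_eq_mk.2 hQP'⟩

theorem Step.size_eq_succ {x y : Beh} {η : Act} (h : Step x η y) : x.size = y.size + 1 := by
  obtain ⟨P, P', rfl, rfl, hs⟩ := h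
  exact hs.size_eq_succ

theorem step_pre (η : Act) (x : Beh) : Step (pre η x) η x := by
  induction x using Quotient.ind with
  | _ P => exact ⟨_, P, rfl, rfl, .pre η P⟩

theorem Step.eq_of_pre {η θ : Act} {x y : Beh} (h : Step (pre η x) θ y) : y = x := by
  induction x using Quotient.ind with
  | _ P =>
    obtain ⟨P', hs, rfl⟩ := step_mk_iff.1 h
    cases hs
    rfl

theorem Step.mul_right {x x' : Beh} {η : Act} (h : Step x η x') (y : Beh) :
    Step (x * y) η (x' * y) := by
  obtain ⟨P, P', rfl, rfl, hs⟩ := h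
  induction y using Quotient.ind with
  | _ Q => exact ⟨_, _, rfl, rfl, .parL Q hs⟩

theorem Step.of_mul {x y z : Beh} {η : Act} (h : Step (x * y) η z) :
    (∃ x', Step x η x' ∧ z = x' * y) ∨ (∃ y', Step y η y' ∧ z = x * y') := by
  induction x using Quotient.ind with
  | _ P =>
  induction y using Quotient.ind with
  | _ Q =>
    obtain ⟨R, hs, rfl⟩ := step_mk_iff.1 h
    cases hs with
    | parL _ hs => exact .inl ⟨_, step_mk_iff.2 ⟨_, hs, rfl⟩, rfl⟩
    | parR _ hs => exact .inr ⟨_, step_mk_iff.2 ⟨_, hs, rfl⟩, rfl⟩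

theorem exists_eq_pre_of_irreducible {x : Beh} (hx : Irreducible x) : ∃ η y, x = pre η y := by
  induction x using Quotient.ind with
  | _ P =>
    induction P with
    | nil => exact absurd isUnit_one hx.not_isUnit
    | pre η P _ => exact ⟨η, ⟦P⟧, rfl⟩
    | par P Q ihP ihQ =>
      rw [mk_par] at hx ⊢
      rcases hx.isUnit_or_isUnit rfl with hP | hQ
      · rw [isUnit_iff_eq_one.1 hP, one_mul] at hx ⊢
        exact ihQ hx
      · rw [isUnit_iff_eq_one.1 hQ, mul_one] at hx ⊢
        exact ihP hx

noncomputable instance : DecidableEq Beh := Classical.decEq Beh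

open Multiset

theorem size_le_size_prod {S : Multiset Beh} {p : Beh} (hp : p ∈ S) : p.size ≤ S.prod.size := by
  rw [← cons_erase hp, prod_cons, size_mul]
  omega

theorem count_eq_zero_of_size_prod_lt {S : Multiset Beh} {p : Beh} (h : S.prod.size < p.size) :
    count p S = 0 :=
  count_eq_zero.2 fun hp => (size_le_size_prod hp).not_gt h

theorem eq_zero_of_prod_eq_one {S : Multiset Beh} (hS : ∀ p ∈ S, Irreducible p)
    (h : S.prod = 1) : S = 0 :=
  eq_zero_of_forall_notMem fun p hp => (hS p hp).not_isUnit <| isUnit_iff_eq_one.2 <|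
    size_eq_zero.1 <| by simpa [h] using size_le_size_prod hp

theorem mem_of_irreducible_prod {S : Multiset Beh} (hS : ∀ p ∈ S, Irreducible p)
    (h : Irreducible S.prod) : S.prod ∈ S := by
  induction S using Multiset.induction_on with
  | empty => exact absurd isUnit_one h.not_isUnit
  | cons q S _ =>
    rw [prod_cons] at h ⊢
    have hq := hS q (mem_cons_self q S)
    rcases h.isUnit_or_isUnit rfl with hu | hu
    · exact absurd hu hq.not_isUnit
    · have := eq_zero_of_prod_eq_one (fun p hp => hS p (mem_cons_of_mem hp))
        (isUnit_iff_eq_one.1 hu)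
      simp [this]

theorem Step.prod_of_mem {S : Multiset Beh} {p x : Beh} {η : Act} (hp : p ∈ S)
    (h : Step p η x) : Step S.prod η (x * (S.erase p).prod) := by
  rw [← cons_erase hp, prod_cons, erase_cons_head]
  exact h.mul_right _

theorem Step.exists_of_prod {S : Multiset Beh} {z : Beh} {η : Act} (h : Step S.prod η z) :
    ∃ r ∈ S, ∃ y, Step r η y ∧ z = y * (S.erase r).prod := by
  induction S using Multiset.induction_on generalizing z with
  | empty => simpa using h.size_eq_succ
  | cons a S ih =>
    rw [prod_cons] at h
    rcases h.of_mul with ⟨x', hx', rfl⟩ | ⟨y', hy', rfl⟩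
    · exact ⟨a, mem_cons_self a S, x', hx', by rw [erase_cons_head]⟩
    · obtain ⟨r, hr, y, hry, rfl⟩ := ih hy'
      refine ⟨r, mem_cons_of_mem hr, y, hry, ?_⟩
      rw [erase_cons_tail_of_mem hr, prod_cons, mul_left_comm]

theorem exists_step_erase_of_prod_eq {S T : Multiset Beh} {t x : Beh} {η : Act}
    (hST : S.prod = T.prod) (ht : t ∈ S) (h : Step t η x) :
    ∃ r ∈ T, ∃ y, Step r η y ∧ x * (S.erase t).prod = y * (T.erase r).prod :=
  (hST ▸ h.prod_of_mem ht).exists_of_prod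

theorem exists_factors (x : Beh) : ∃ S : Multiset Beh, (∀ p ∈ S, Irreducible p) ∧ S.prod = x := by
  induction hn : x.size using Nat.strong_induction_on generalizing x with
  | _ n ih =>
    by_cases h1 : x = 1
    · exact ⟨0, by simp, by simp [h1]⟩
    by_cases hx : Irreducible x
    · exact ⟨{x}, by simpa using hx, by simp⟩
    obtain ⟨u, v, rfl, hu, hv⟩ : ∃ u v, x = u * v ∧ u ≠ 1 ∧ v ≠ 1 := by
      simpa [irreducible_iff, h1, not_or] using hx
    have hu' := mt size_eq_zero.1 hu
    have hv' := mt size_eq_zero.1 hv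
    rw [size_mul] at hn
    obtain ⟨Su, hSu, rfl⟩ := ih u.size (by omega) u rfl
    obtain ⟨Sv, hSv, rfl⟩ := ih v.size (by omega) v rfl
    refine ⟨Su + Sv, fun p hp => ?_, prod_add Su Sv⟩
    rcases mem_add.1 hp with hp | hp
    exacts [hSu p hp, hSv p hp]

def UniqueFactorsBelow (n : ℕ) : Prop :=
  ∀ S T : Multiset Beh, (∀ p ∈ S, Irreducible p) → (∀ q ∈ T, Irreducible q) →
    S.prod = T.prod → S.prod.size < n → S = T

theorem count_eq_of_mul_prod_eq {n : ℕ} (ih : UniqueFactorsBelow n) {S T : Multiset Beh}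
    {x y p : Beh} (hS : ∀ p ∈ S, Irreducible p) (hT : ∀ q ∈ T, Irreducible q)
    (h : x * S.prod = y * T.prod) (hn : (x * S.prod).size < n) (hx : x.size < p.size)
    (hy : y.size < p.size) : count p S = count p T := by
  obtain ⟨X, hX, rfl⟩ := exists_factors x
  obtain ⟨Y, hY, rfl⟩ := exists_factors y
  have hXS : X + S = Y + T := by
    refine ih _ _ ?_ ?_ (by rwa [prod_add, prod_add]) (by rwa [prod_add])
    · simpa only [mem_add] using fun p hp => hp.elim (hX p) (hS p)
    · simpa only [mem_add] using fun p hp => hp.elim (hY p) (hT p)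
  simpa [count_eq_zero_of_size_prod_lt hx, count_eq_zero_of_size_prod_lt hy] using
    congrArg (count p) hXS

section Uniqueness

variable {n : ℕ} {S T : Multiset Beh} {p : Beh}

/-- The residuals `x` and `y` are smaller than `p`, so their factors are not copies of `p`. -/
theorem exists_count_erase_eq (ih : UniqueFactorsBelow n) (hS : ∀ p ∈ S, Irreducible p)
    (hT : ∀ q ∈ T, Irreducible q) (hST : S.prod = T.prod) (hn : S.prod.size ≤ n)
    (hmaxS : ∀ q ∈ S, q.size ≤ p.size) (hmaxT : ∀ q ∈ T, q.size ≤ p.size)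
    {t x : Beh} {η : Act} (ht : t ∈ S) (htx : Step t η x) :
    ∃ r ∈ T, ∃ y, Step r η y ∧ x * (S.erase t).prod = y * (T.erase r).prod ∧
      count p (S.erase t) = count p (T.erase r) := by
  obtain ⟨r, hr, y, hry, h⟩ := exists_step_erase_of_prod_eq hST ht htx
  refine ⟨r, hr, y, hry, h, count_eq_of_mul_prod_eq ih
    (fun q hq => hS q (mem_of_mem_erase hq)) (fun q hq => hT q (mem_of_mem_erase hq)) h ?_ ?_ ?_⟩
  · have := size_le_size_prod ht
    rw [← cons_erase ht, prod_cons, size_mul, htx.size_eq_succ] at hn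
    rw [size_mul]
    omega
  · have := htx.size_eq_succ
    have := hmaxS t ht
    omega
  · have := hry.size_eq_succ
    have := hmaxT r hr
    omega

theorem mem_of_size_max (ih : UniqueFactorsBelow n) (hS : ∀ p ∈ S, Irreducible p)
    (hT : ∀ q ∈ T, Irreducible q) (hST : S.prod = T.prod) (hn : S.prod.size ≤ n)
    (hmaxS : ∀ q ∈ S, q.size ≤ p.size) (hmaxT : ∀ q ∈ T, q.size ≤ p.size) (hp : p ∈ S) :
    p ∈ T := by
  rcases (S.erase p).empty_or_exists_mem with hSp | ⟨t, ht⟩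
  · have hSp : S.prod = p := by rw [← cons_erase hp, hSp, prod_cons, prod_zero, mul_one]
    rw [← hSp, hST]
    exact mem_of_irreducible_prod hT (hST ▸ hSp ▸ hS p hp)
  obtain ⟨θ, x, rfl⟩ := exists_eq_pre_of_irreducible (hS t (mem_of_mem_erase ht))
  obtain ⟨r, -, -, -, -, hcount⟩ :=
    exists_count_erase_eq ih hS hT hST hn hmaxS hmaxT (mem_of_mem_erase ht) (step_pre θ x)
  have hpt : p ∈ S.erase (pre θ x) := by
    by_cases h : p = pre θ x
    · exact h ▸ ht
    · exact (mem_erase_of_ne h).2 hp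
  exact mem_of_mem_erase (count_pos.1 (hcount ▸ count_pos.2 hpt))

theorem eq_of_size_max (ih : UniqueFactorsBelow n) (hS : ∀ p ∈ S, Irreducible p)
    (hT : ∀ q ∈ T, Irreducible q) (hST : S.prod = T.prod) (hn : S.prod.size ≤ n)
    (hmaxS : ∀ q ∈ S, q.size ≤ p.size) (hmaxT : ∀ q ∈ T, q.size ≤ p.size) (hpS : p ∈ S)
    (hpT : p ∈ T) : S = T := by
  obtain ⟨η, x, hpx⟩ := exists_eq_pre_of_irreducible (hS p hpS)
  have hstep : Step p η x := hpx ▸ step_pre η x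
  obtain ⟨r, hrT, y, hry, hprod, hcount⟩ :=
    exists_count_erase_eq ih hS hT hST hn hmaxS hmaxT hpS hstep
  obtain ⟨r', -, -, -, -, hcount'⟩ :=
    exists_count_erase_eq ih hT hS hST.symm (hST ▸ hn) hmaxT hmaxS hpT hstep
  -- `count p S - 1 = count p (T.erase r)` and `count p T - 1 = count p (S.erase r')`
  -- can only both hold if `r = p`.
  have hr : r = p := by
    by_contra hne
    have := count_pos.2 hpS
    have := count_pos.2 hpT
    rw [count_erase_self, count_erase_of_ne (Ne.symm hne)] at hcount
    rw [count_erase_self] at hcount'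
    by_cases hr' : r' = p
    · rw [hr', count_erase_self] at hcount'
      omega
    · rw [count_erase_of_ne (Ne.symm hr')] at hcount'
      omega
  subst hr
  have hyx : y = x := (hpx ▸ hry).eq_of_pre
  subst hyx
  obtain ⟨X, hX, rfl⟩ := exists_factors y
  have hXS : X + S.erase r = X + T.erase r := by
    refine ih _ _ ?_ ?_ (by rwa [prod_add, prod_add]) ?_
    · simpa only [mem_add] using fun q hq => hq.elim (hX q) (hS q ∘ mem_of_mem_erase)
    · simpa only [mem_add] using fun q hq => hq.elim (hX q) (hT q ∘ mem_of_mem_erase)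
    · have := hstep.size_eq_succ
      rw [← cons_erase hpS, prod_cons, size_mul] at hn
      rw [prod_add, size_mul]
      omega
  rw [← cons_erase hpS, ← cons_erase hpT, add_left_cancel hXS]

theorem uniqueFactorsBelow (n : ℕ) : UniqueFactorsBelow n := by
  induction n with
  | zero => exact fun _ _ _ _ _ h => absurd h (Nat.not_lt_zero _)
  | succ n ih =>
    intro S T hS hT hST hn
    rcases eq_or_ne (S + T) 0 with h0 | h0
    · obtain ⟨rfl, rfl⟩ := add_eq_zero.1 h0
      rfl
    obtain ⟨p, hp, hmax⟩ := exists_max_image size h0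
    have hmaxS : ∀ q ∈ S, q.size ≤ p.size := fun q hq => hmax q (mem_add.2 (.inl hq))
    have hmaxT : ∀ q ∈ T, q.size ≤ p.size := fun q hq => hmax q (mem_add.2 (.inr hq))
    have hn' : S.prod.size ≤ n := Nat.le_of_lt_succ hn
    rcases mem_add.1 hp with hpS | hpT
    · exact eq_of_size_max ih hS hT hST hn' hmaxS hmaxT hpS
        (mem_of_size_max ih hS hT hST hn' hmaxS hmaxT hpS)
    · exact (eq_of_size_max ih hT hS hST.symm (hST ▸ hn') hmaxT hmaxS hpT
        (mem_of_size_max ih hT hS hST.symm (hST ▸ hn') hmaxT hmaxS hpT)).symm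

end Uniqueness

theorem factors_unique {S T : Multiset Beh} (hS : ∀ p ∈ S, Irreducible p)
    (hT : ∀ q ∈ T, Irreducible q) (h : S.prod = T.prod) : S = T :=
  uniqueFactorsBelow _ S T hS hT h (Nat.lt_succ_self _)

end Beh

theorem List.Perm.exists_equiv_of_map {α β : Type*} {f : α → β} {l₁ l₂ : List α}
    (h : (l₁.map f).Perm (l₂.map f)) :
    ∃ e : Fin l₁.length ≃ Fin l₂.length, ∀ i, f (l₁.get i) = f (l₂.get (e i)) := by
  classical
  let e := Equiv.ofBijective h.idxBij ⟨h.idxBij_injective, h.idxBij_surjective⟩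
  refine ⟨(finCongr (length_map f)).symm.trans (e.trans (finCongr (length_map f))), fun i => ?_⟩
  have := h.getElem_idxBij_eq_getElem (Fin.cast (length_map f).symm i)
  simp only [List.getElem_map, Fin.val_cast] at this
  exact this.symm

theorem mk_prodList (l : List Proc) : (⟦prodList l⟧ : Beh) = (l.map (⟦·⟧)).prod := by
  induction l with
  | nil => rfl
  | cons P l ih => rw [List.map_cons, List.prod_cons, ← ih]; rfl

theorem perm_map_mk_of_bisim_prodList {l₁ l₂ : List Proc} (h₁ : ∀ p ∈ l₁, IsPrime p)
    (h₂ : ∀ q ∈ l₂, IsPrime q) (h : Bisim (prodList l₁) (prodList l₂)) :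
    (l₁.map (⟦·⟧ : Proc → Beh)).Perm (l₂.map (⟦·⟧)) := by
  refine Multiset.coe_eq_coe.1 (Beh.factors_unique ?_ ?_ ?_)
  · simpa [isPrime_iff_irreducible] using h₁
  · simpa [isPrime_iff_irreducible] using h₂
  · rw [Multiset.prod_coe, Multiset.prod_coe, ← mk_prodList, ← mk_prodList]
    exact Beh.mk_eq_mk.2 h

/-- every process admits a prime decomposition, unique up to
    bisimilarity and permutation of the components. -/
theorem unique_prime_decomposition :
    (∀ P : Proc, ∃ l : List Proc, (∀ p ∈ l, IsPrime p) ∧ Bisim P (prodList l)) ∧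
    (∀ l₁ l₂ : List Proc, (∀ p ∈ l₁, IsPrime p) → (∀ q ∈ l₂, IsPrime q) →
      Bisim (prodList l₁) (prodList l₂) →
      ∃ e : Fin l₁.length ≃ Fin l₂.length,
        ∀ i : Fin l₁.length, Bisim (l₁.get i) (l₂.get (e i))) := by
  refine ⟨fun P => ?_, fun l₁ l₂ h₁ h₂ h => ?_⟩
  · obtain ⟨S, hS, hSP⟩ := Beh.exists_factors ⟦P⟧
    refine ⟨S.toList.map Quotient.out, ?_, Beh.mk_eq_mk.1 ?_⟩
    · simpa [isPrime_iff_irreducible] using hS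
    · simpa [mk_prodList] using hSP.symm
  · obtain ⟨e, he⟩ := (perm_map_mk_of_bisim_prodList h₁ h₂ h).exists_equiv_of_map
    exact ⟨e, fun i => Beh.mk_eq_mk.1 (he i)⟩
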